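/- arXiv:1711.08729 — 2 statements merged into one kernel-verified Lean document; each statement's English description precedes it below -/
import Mathlib

section
/- Let n ≥ 1, let g ∈ F_q[t] be monic with deg g ≤ n − ⌊n/2⌋, and set s = n − ⌊n/2⌋ − deg g ≥ 0. Then the set S_{s,g} = { t^{⌊n/2⌋} g b₁ + b₂ : b₁ ∈ F_q[t] monic with deg b₁ = s, b₂ ∈ F_q[t] with deg b₂ < deg g } consists of monic polynomials of degree n, and every monic polynomial of degree n is R_{s,g}-equivalent to exactly one element of S_{s,g}. -/
/-!
Common setup: `F_q((1/t))` is realized as `LaurentSeries Fq` (formal Laurent series in `X`)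
under the identification `X = 1/t`; thus the coefficient of `t^i` is the coefficient of
`X^(-i)`, and `𝕋` consists of series supported on positive powers of `X`.
-/

open Polynomial
open scoped Classical

/-- The element `t` of `F_q((1/t))`, i.e. the Laurent series `X⁻¹`. -/
noncomputable def tElem (Fq : Type) [Field Fq] : LaurentSeries Fq :=
  HahnSeries.single (-1 : ℤ) 1

/-- The natural embedding of `F_q[t]` into `F_q((1/t))`: evaluate the polynomial at `t`. -/
noncomputable def toL {Fq : Type} [Field Fq] (f : Polynomial Fq) : LaurentSeries Fq :=
  Polynomial.aeval (tElem Fq) f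

/-- The norm on `F_q((1/t))`: `|x| = q^j` where `j` is the largest index with `x_j ≠ 0`
(in `t`-coefficients, so `j = -(order of the Hahn series)`), and `|0| = 0`. -/
noncomputable def nrm {Fq : Type} [Field Fq] [Fintype Fq] (x : LaurentSeries Fq) : ℝ :=
  if x = 0 then 0 else (Fintype.card Fq : ℝ) ^ (-(HahnSeries.order x))

/-- `𝕋 = {∑_{i<0} x_i t^i}`: Laurent series supported on negative powers of `t`. -/
def TT (Fq : Type) [Field Fq] : Set (LaurentSeries Fq) :=
  {x | ∀ n : ℤ, n ≤ 0 → x.coeff n = 0}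

/-- The exponential `e_q(x) = ψ(x_{-1})`, where `ψ(y) = e^{2πi·tr(y)/p}` with
`tr : F_q → F_p` the field trace, and `x_{-1}` is the coefficient of `t^{-1}` in `x`
(the coefficient of `X^1` of the Hahn series). -/
noncomputable def eQ {Fq : Type} [Field Fq] [Fintype Fq] (p : ℕ) [CharP Fq p]
    (x : LaurentSeries Fq) : ℂ :=
  letI := ZMod.algebra Fq p
  Complex.exp (2 * Real.pi * Complex.I *
    (((Algebra.trace (ZMod p) Fq (x.coeff 1)).val : ℂ) / (p : ℂ)))

/-- The Möbius function on `F_q[t]`: `μ(f) = (-1)^r` if `f` is a product of `r` distinct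
irreducibles, and `μ(f) = 0` otherwise. -/
noncomputable def mu {Fq : Type} [Field Fq] (f : Polynomial Fq) : ℤ :=
  if Squarefree f then
    (-1) ^ Multiset.card (UniqueFactorizationMonoid.normalizedFactors f)
  else 0

/-- The monic polynomial `X^n + ∑_{i<n} c_i X^i`; monic polynomials of degree `n`
are exactly the `stdPoly n c` for a unique `c : Fin n → Fq`. -/
noncomputable def stdPoly {Fq : Type} [Field Fq] (n : ℕ) (c : Fin n → Fq) : Polynomial Fq :=
  X ^ n + ∑ i : Fin n, C (c i) * X ^ (i : ℕ)

/-- The polynomial `∑_{i<k} c_i X^i` of degree `< k`. -/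
noncomputable def ltPoly {Fq : Type} [Field Fq] (k : ℕ) (c : Fin k → Fq) : Polynomial Fq :=
  ∑ i : Fin k, C (c i) * X ^ (i : ℕ)

/-- Hayes' relation `R_{s,g}` on monic polynomials:
`a ≡ b mod R_{s,g}` iff `g ∣ a - b` and `|a/t^{deg a} - b/t^{deg b}| < q^{-s}`.
(Here `1/t^{deg a}` is the Laurent series `X^{deg a}`.) -/
def Requiv {Fq : Type} [Field Fq] [Fintype Fq] (s : ℕ) (g a b : Polynomial Fq) : Prop :=
  g ∣ (a - b) ∧
  nrm (toL a * HahnSeries.single (a.natDegree : ℤ) 1 -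
        toL b * HahnSeries.single (b.natDegree : ℤ) 1)
    < (Fintype.card Fq : ℝ) ^ (-(s : ℤ))

/-- `φ(g)`: the number of invertible residue classes modulo `g`. -/
noncomputable def phi {Fq : Type} [Field Fq] (g : Polynomial Fq) : ℕ :=
  Nat.card ((Polynomial Fq ⧸ Ideal.span {g})ˣ)

/-- `χ` is (the extension by zero of) a character of the unit group `R*_{s,g}` of the quotient
monoid of monic polynomials modulo `R_{s,g}`: it vanishes off monic polynomials, it is
multiplicative on monic polynomials, it is constant on `R_{s,g}`-classes, and it vanishes at a
monic polynomial exactly when that polynomial is not coprime to `g`.  (Such functions correspond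
bijectively to the characters of the finite abelian group `R*_{s,g}`.) -/
def IsRChar {Fq : Type} [Field Fq] [Fintype Fq] (s : ℕ) (g : Polynomial Fq)
    (χ : Polynomial Fq → ℂ) : Prop :=
  (∀ f : Polynomial Fq, ¬ f.Monic → χ f = 0) ∧
  (∀ a b : Polynomial Fq, a.Monic → b.Monic → χ (a * b) = χ a * χ b) ∧
  (∀ a b : Polynomial Fq, a.Monic → b.Monic → Requiv s g a b → χ a = χ b) ∧
  (∀ f : Polynomial Fq, f.Monic → (χ f = 0 ↔ ¬ IsCoprime f g))

/-!
For monic `a`, `b` of degree `n` the norm condition in `R_{s,g}` reads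
`deg (a - b) < n - s = deg g + ⌊n/2⌋`, so `a ≡ b` exactly when `a - b = g * w` with
`deg w < ⌊n/2⌋`. Dividing `f` by `g`, and then the quotient by `t^⌊n/2⌋`, writes
`f = t^⌊n/2⌋ * g * b₁ + b₂ + g * w` in exactly one way with `deg b₂ < deg g` and
`deg w < ⌊n/2⌋`; the representative of `f` is `t^⌊n/2⌋ * g * b₁ + b₂`.
-/

section PolynomialDivision

variable {R : Type*} [CommRing R] {f g : R[X]} {m : ℕ}

theorem Polynomial.Monic.degree_mul_lt_natDegree_add_iff [Nontrivial R] (hg : g.Monic)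
    {w : R[X]} : (g * w).degree < ↑(g.natDegree + m) ↔ w.degree < m := by
  rw [mul_comm, hg.degree_mul, degree_eq_natDegree hg.ne_zero]
  cases w.degree with
  | bot => simp
  | coe d =>
    simp only [Nat.cast_withBot, ← WithBot.coe_add, WithBot.coe_lt_coe]
    omega

theorem Polynomial.Monic.divByMonic_monic (hf : f.Monic) (hg : g.Monic)
    (h : g.natDegree ≤ f.natDegree) : (f /ₘ g).Monic := by
  nontriviality R
  have hdeg : g.degree ≤ f.degree := by
    rw [degree_eq_natDegree hg.ne_zero, degree_eq_natDegree hf.ne_zero]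
    exact_mod_cast h
  exact (leadingCoeff_divByMonic_of_monic hg hdeg).trans hf.leadingCoeff

theorem Polynomial.Monic.X_pow_mul_mul_add [Nontrivial R] {b₁ b₂ : R[X]} (hg : g.Monic)
    (hb₁ : b₁.Monic) (hb₂ : b₂.degree < g.degree) :
    (X ^ m * g * b₁ + b₂).Monic ∧
      (X ^ m * g * b₁ + b₂).natDegree = m + g.natDegree + b₁.natDegree := by
  have hmain : (X ^ m * g * b₁).Monic := ((monic_X_pow m).mul hg).mul hb₁
  have hdeg : (X ^ m * g * b₁).natDegree = m + g.natDegree + b₁.natDegree := by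
    rw [((monic_X_pow m).mul hg).natDegree_mul hb₁, (monic_X_pow m).natDegree_mul hg,
      natDegree_X_pow]
  have hlt : b₂.degree < (X ^ m * g * b₁).degree := by
    refine hb₂.trans_le ?_
    rw [degree_eq_natDegree hg.ne_zero, degree_eq_natDegree hmain.ne_zero, hdeg]
    exact_mod_cast (by omega)
  exact ⟨hmain.add_of_left hlt, (natDegree_add_eq_left_of_degree_lt hlt).trans hdeg⟩

theorem Polynomial.sub_X_pow_mul_mul_divByMonic_add_modByMonic (g : R[X]) :
    f - (X ^ m * g * (f /ₘ g /ₘ X ^ m) + f %ₘ g) = g * (f /ₘ g %ₘ X ^ m) := by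
  linear_combination -modByMonic_add_div f g - g * modByMonic_add_div (f /ₘ g) (X ^ m)

theorem Polynomial.X_pow_mul_mul_add_eq_of_sub_eq_mul {b₁ b₂ w : R[X]} (hg : g.Monic)
    (hb₂ : b₂.degree < g.degree) (hw : w.degree < m)
    (h : f - (X ^ m * g * b₁ + b₂) = g * w) :
    X ^ m * g * b₁ + b₂ = X ^ m * g * (f /ₘ g /ₘ X ^ m) + f %ₘ g := by
  nontriviality R
  obtain ⟨hdiv, hmod⟩ := div_modByMonic_unique (f := f) (w + X ^ m * b₁) b₂ hg
    ⟨by linear_combination -h, hb₂⟩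
  obtain ⟨hdiv', -⟩ := div_modByMonic_unique b₁ w (monic_X_pow m)
    ⟨rfl, by rwa [degree_X_pow]⟩
  rw [hdiv, hdiv', hmod]

end PolynomialDivision

section LaurentNorm

variable {Fq : Type} [Field Fq]

theorem tElem_pow (i : ℕ) : tElem Fq ^ i = HahnSeries.single (-(i : ℤ)) 1 := by
  simp [tElem, HahnSeries.single_pow]

theorem coeff_toL (d : Fq[X]) (k : ℤ) :
    (toL d).coeff k = if k ≤ 0 then d.coeff (-k).toNat else 0 := by
  induction d using Polynomial.induction_on' with
  | add p q hp hq =>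
    simp only [toL, map_add, HahnSeries.coeff_add, coeff_add] at hp hq ⊢
    rw [hp, hq]
    split_ifs <;> simp
  | monomial i a =>
    have hC : algebraMap Fq (LaurentSeries Fq) a = HahnSeries.single 0 a := by
      rw [HahnSeries.algebraMap_apply', show algebraMap Fq (PowerSeries Fq) a = PowerSeries.C a
        from rfl, HahnSeries.ofPowerSeries_C]
      rfl
    rw [toL, aeval_monomial, tElem_pow, hC, HahnSeries.single_mul_single, zero_add, mul_one,
      HahnSeries.coeff_single, coeff_monomial]
    by_cases hk : k = -(i : ℤ)
    · rw [if_pos hk, if_pos (by omega), if_pos (by omega)]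
    · rw [if_neg hk]
      split_ifs <;> first | rfl | omega

theorem coeff_toL_neg (d : Fq[X]) (i : ℕ) : (toL d).coeff (-(i : ℤ)) = d.coeff i := by
  rw [coeff_toL, if_pos (by omega), neg_neg, Int.toNat_natCast]

theorem toL_ne_zero {d : Fq[X]} (hd : d ≠ 0) : toL d ≠ 0 := fun h =>
  leadingCoeff_ne_zero.mpr hd (by rw [leadingCoeff, ← coeff_toL_neg, h, HahnSeries.coeff_zero])

theorem order_toL {d : Fq[X]} (hd : d ≠ 0) : (toL d).order = -(d.natDegree : ℤ) := by
  have hlead : (toL d).coeff (-(d.natDegree : ℤ)) ≠ 0 := by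
    rw [coeff_toL_neg]
    exact leadingCoeff_ne_zero.mpr hd
  refine le_antisymm (HahnSeries.order_le_of_coeff_ne_zero hlead)
    ((HahnSeries.le_order_iff_forall (toL_ne_zero hd)).mpr fun j hj => ?_)
  rw [coeff_toL, if_pos (by omega)]
  exact coeff_eq_zero_of_natDegree_lt (by omega)

variable [Fintype Fq]

theorem nrm_toL_mul_single {d : Fq[X]} (hd : d ≠ 0) (n : ℤ) :
    nrm (toL d * HahnSeries.single n 1) = (Fintype.card Fq : ℝ) ^ ((d.natDegree : ℤ) - n) := by
  have hsingle : (HahnSeries.single n (1 : Fq) : LaurentSeries Fq) ≠ 0 :=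
    HahnSeries.single_ne_zero one_ne_zero
  rw [nrm, if_neg (mul_ne_zero (toL_ne_zero hd) hsingle),
    HahnSeries.order_mul (toL_ne_zero hd) hsingle, order_toL hd,
    HahnSeries.order_single one_ne_zero]
  congr 1
  ring

theorem nrm_toL_mul_single_lt_iff {s n : ℕ} (hsn : s ≤ n) (d : Fq[X]) :
    nrm (toL d * HahnSeries.single (n : ℤ) 1) < (Fintype.card Fq : ℝ) ^ (-(s : ℤ)) ↔
      d.degree < ↑(n - s) := by
  have hq : (1 : ℝ) < Fintype.card Fq := by exact_mod_cast Fintype.one_lt_card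
  rcases eq_or_ne d 0 with rfl | hd
  · simp only [toL, map_zero, zero_mul, nrm, if_true, degree_zero]
    exact iff_of_true (zpow_pos (by positivity) _) (WithBot.bot_lt_coe _)
  · rw [nrm_toL_mul_single hd, zpow_lt_zpow_iff_right₀ hq, degree_eq_natDegree hd, Nat.cast_lt]
    omega

end LaurentNorm

theorem requiv_iff_exists_mul {Fq : Type} [Field Fq] [Fintype Fq] {s m n : ℕ}
    {g a b : Fq[X]} (hg : g.Monic) (ha : a.natDegree = n) (hb : b.natDegree = n)
    (hn : g.natDegree + m + s = n) :
    Requiv s g a b ↔ ∃ w : Fq[X], w.degree < m ∧ a - b = g * w := by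
  have hsub : toL a * HahnSeries.single (n : ℤ) 1 - toL b * HahnSeries.single (n : ℤ) 1 =
      toL (a - b) * HahnSeries.single (n : ℤ) 1 := by
    rw [toL, toL, toL, map_sub, sub_mul]
  rw [Requiv, ha, hb, hsub, nrm_toL_mul_single_lt_iff (by omega),
    show n - s = g.natDegree + m by omega]
  constructor
  · rintro ⟨⟨w, hw⟩, hdeg⟩
    rw [hw, hg.degree_mul_lt_natDegree_add_iff] at hdeg
    exact ⟨w, hdeg, hw⟩
  · rintro ⟨w, hdeg, hw⟩
    rw [hw, hg.degree_mul_lt_natDegree_add_iff]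
    exact ⟨dvd_mul_right g w, hdeg⟩

theorem representatives_complete_general
    (Fq : Type) [Field Fq] [Fintype Fq] (n : ℕ)
    (g : Polynomial Fq) (hg : g.Monic) (hdeg : g.natDegree ≤ n - n / 2)
    (s : ℕ) (hs : s = n - n / 2 - g.natDegree)
    (S : Set (Polynomial Fq))
    (hS : S = {f : Polynomial Fq | ∃ b₁ b₂ : Polynomial Fq,
      b₁.Monic ∧ b₁.natDegree = s ∧ b₂.degree < g.degree ∧
      f = X ^ (n / 2) * g * b₁ + b₂}) :
    (∀ f ∈ S, f.Monic ∧ f.natDegree = n) ∧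
    (∀ f : Polynomial Fq, f.Monic → f.natDegree = n →
      ∃! b : Polynomial Fq, b ∈ S ∧ Requiv s g f b) := by
  have hmem : ∀ f ∈ S, f.Monic ∧ f.natDegree = n := by
    rintro _ hfS
    rw [hS] at hfS
    obtain ⟨b₁, b₂, hb₁, hb₁s, hb₂, rfl⟩ := hfS
    obtain ⟨hmonic, hnat⟩ := hg.X_pow_mul_mul_add (m := n / 2) hb₁ hb₂
    exact ⟨hmonic, by omega⟩
  refine ⟨hmem, fun f hf hfn => ?_⟩
  have hsplit : g.natDegree + n / 2 + s = n := by omega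
  have hq0 : (f /ₘ g).natDegree = n - g.natDegree := by rw [natDegree_divByMonic f hg, hfn]
  have hq1 : (f /ₘ g /ₘ X ^ (n / 2)).natDegree = s := by
    rw [natDegree_divByMonic _ (monic_X_pow _), hq0, natDegree_X_pow]
    omega
  have hq1_monic : (f /ₘ g /ₘ X ^ (n / 2)).Monic :=
    (hf.divByMonic_monic hg (by omega)).divByMonic_monic (monic_X_pow _)
      (by rw [natDegree_X_pow, hq0]; omega)
  have hrep : X ^ (n / 2) * g * (f /ₘ g /ₘ X ^ (n / 2)) + f %ₘ g ∈ S := by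
    rw [hS]
    exact ⟨_, _, hq1_monic, hq1, degree_modByMonic_lt f hg, rfl⟩
  refine ⟨_, ⟨hrep, ?_⟩, ?_⟩
  · rw [requiv_iff_exists_mul hg hfn (hmem _ hrep).2 hsplit]
    exact ⟨_, by simpa using degree_modByMonic_lt (f /ₘ g) (monic_X_pow (n / 2)),
      sub_X_pow_mul_mul_divByMonic_add_modByMonic g⟩
  · rintro b ⟨hbS, hb⟩
    obtain ⟨w, hw, hfw⟩ := (requiv_iff_exists_mul hg hfn (hmem b hbS).2 hsplit).mp hb
    rw [hS] at hbS
    obtain ⟨b₁, b₂, -, -, hb₂, rfl⟩ := hbS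
    exact X_pow_mul_mul_add_eq_of_sub_eq_mul hg hb₂ hw hfw

/-- The set `S_{s,g} = {t^{⌊n/2⌋} g b₁ + b₂ : b₁ monic of degree s,
deg b₂ < deg g}` (with `s = n - ⌊n/2⌋ - deg g`) consists of monic polynomials of degree `n`,
and every monic polynomial of degree `n` is `R_{s,g}`-equivalent to exactly one element of it. -/
theorem representatives_complete
    (Fq : Type) [Field Fq] [Fintype Fq] (n : ℕ) (hn : 1 ≤ n)
    (g : Polynomial Fq) (hg : g.Monic) (hdeg : g.natDegree ≤ n - n / 2)
    (s : ℕ) (hs : s = n - n / 2 - g.natDegree)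
    (S : Set (Polynomial Fq))
    (hS : S = {f : Polynomial Fq | ∃ b₁ b₂ : Polynomial Fq,
      b₁.Monic ∧ b₁.natDegree = s ∧ b₂.degree < g.degree ∧
      f = X ^ (n / 2) * g * b₁ + b₂}) :
    (∀ f ∈ S, f.Monic ∧ f.natDegree = n) ∧
    (∀ f : Polynomial Fq, f.Monic → f.natDegree = n →
      ∃! b : Polynomial Fq, b ∈ S ∧ Requiv s g f b) :=
  representatives_complete_general Fq n g hg hdeg s hs S hS
end

section
/- Let s ≥ 0 be an integer and g ∈ F_q[t]. A monic polynomial f is invertible in the quotient monoid F_q[t]^×/R_{s,g} if and only if gcd(f, g) = 1. -/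
/-!
Common setup: `F_q((1/t))` is realized as `LaurentSeries Fq` (formal Laurent series in `X`)
under the identification `X = 1/t`; thus the coefficient of `t^i` is the coefficient of
`X^(-i)`, and `𝕋` consists of series supported on positive powers of `X`.
-/

open Polynomial
open scoped Classical

/-!
If `f * h ≡ 1 mod R_{s,g}` then `g ∣ f * h - 1`, so `f` is coprime to `g`. Conversely, take
`u` with `f * u ≡ 1 mod g` and add to it the multiple `g * (X ^ m /ₘ (f * g))` of `g` for a
large `m`: then `f * h = X ^ m + (f * u - r)` with `r = X ^ m %ₘ (f * g)` of bounded degree,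
so `f * h` agrees with `t ^ m` in all coefficients of degree `≥ m - s`, i.e. `f * h / t ^ m` is
`q^{-s}`-close to `1`.
-/

section Norm

variable {Fq : Type} [Field Fq]

lemma toL_monomial (i : ℕ) (a : Fq) :
    toL (monomial i a) = HahnSeries.single (-(i : ℤ)) a := by
  rw [toL, aeval_monomial, HahnSeries.algebraMap_apply', PowerSeries.algebraMap_apply,
    Algebra.algebraMap_self, RingHom.id_apply, HahnSeries.ofPowerSeries_C, HahnSeries.C_apply,
    tElem, HahnSeries.single_pow, one_pow, HahnSeries.single_mul_single, zero_add, mul_one]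
  norm_num

lemma toL_coeff_neg (e : Fq[X]) (k : ℕ) : (toL e).coeff (-(k : ℤ)) = e.coeff k := by
  induction e using Polynomial.induction_on' with
  | add p q hp hq => simp only [toL, map_add, HahnSeries.coeff_add, coeff_add] at *; rw [hp, hq]
  | monomial i a =>
    rw [toL_monomial, HahnSeries.coeff_single, coeff_monomial]
    by_cases h : i = k
    · simp [h]
    · rw [if_neg (by omega), if_neg h]

lemma toL_coeff_eq_zero_of_degree_lt {e : Fq[X]} {k : ℕ} (he : e.degree < k) {j : ℤ}
    (hj : j ≤ -k) : (toL e).coeff j = 0 := by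
  obtain ⟨n, rfl⟩ : ∃ n : ℕ, j = -(n : ℤ) := ⟨(-j).toNat, by omega⟩
  rw [toL_coeff_neg]
  exact coeff_eq_zero_of_degree_lt (he.trans_le (by exact_mod_cast (by omega : k ≤ n)))

lemma toL_X_pow_mul_single (m : ℕ) :
    toL (X ^ m : Fq[X]) * HahnSeries.single (m : ℤ) 1 = 1 := by
  rw [← monomial_one_right_eq_X_pow, toL_monomial, HahnSeries.single_mul_single, neg_add_cancel,
    mul_one, HahnSeries.single_zero_one]

variable [Fintype Fq]

lemma nrm_lt_of_coeff_eq_zero {x : LaurentSeries Fq} {s : ℕ}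
    (hx : ∀ n : ℤ, n ≤ s → x.coeff n = 0) : nrm x < (Fintype.card Fq : ℝ) ^ (-(s : ℤ)) := by
  rw [nrm]
  split_ifs with h0
  · positivity
  have hs : (s : ℤ) < x.order := by
    by_contra! hle
    exact h0 (HahnSeries.coeff_order_eq_zero.mp (hx _ hle))
  exact zpow_lt_zpow_right₀ (by exact_mod_cast Fintype.one_lt_card) (by omega)

lemma nrm_toL_mul_single_natDegree_sub_one_lt {F : Fq[X]} {m s : ℕ} (hsm : s ≤ m)
    (hF : (F - X ^ m).degree < ↑(m - s)) :
    nrm (toL F * HahnSeries.single (F.natDegree : ℤ) 1 - 1)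
      < (Fintype.card Fq : ℝ) ^ (-(s : ℤ)) := by
  set e := F - X ^ m
  have hFe : F = X ^ m + e := by ring
  have hdeg : F.natDegree = m := by
    rw [hFe, natDegree_add_eq_left_of_degree_lt, natDegree_X_pow]
    rw [degree_X_pow]
    exact hF.trans_le (by exact_mod_cast Nat.sub_le m s)
  have hshift : toL F * HahnSeries.single (m : ℤ) 1 - 1 = toL e * HahnSeries.single (m : ℤ) 1 := by
    rw [hFe, toL, map_add, ← toL, ← toL, add_mul, toL_X_pow_mul_single, add_sub_cancel_left]
  rw [hdeg, hshift]
  refine nrm_lt_of_coeff_eq_zero fun n hn => ?_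
  rw [← sub_add_cancel n m, HahnSeries.coeff_mul_single_add, mul_one]
  exact toL_coeff_eq_zero_of_degree_lt hF (by omega)

lemma requiv_refl (s : ℕ) (g a : Fq[X]) : Requiv s g a a := by
  refine ⟨by simp, ?_⟩
  rw [sub_self, nrm, if_pos rfl]
  positivity

lemma requiv_one_of_dvd_of_degree_sub_X_pow_lt {g F : Fq[X]} {m s : ℕ} (hg : g ∣ F - 1)
    (hsm : s ≤ m) (hF : (F - X ^ m).degree < ↑(m - s)) : Requiv s g F 1 := by
  refine ⟨hg, ?_⟩
  rw [show toL (1 : Fq[X]) * HahnSeries.single ((1 : Fq[X]).natDegree : ℤ) 1 = 1 by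
    rw [toL, map_one, natDegree_one, Nat.cast_zero, HahnSeries.single_zero_one, mul_one]]
  exact nrm_toL_mul_single_natDegree_sub_one_lt hsm hF

end Norm

lemma exists_monic_dvd_mul_sub_one_degree_mul_sub_X_pow_lt {K : Type*} [Field K] {f g : K[X]}
    (hf : f.Monic) (hg : g.Monic) (hfg : IsCoprime f g) (s : ℕ) :
    ∃ (h : K[X]) (m : ℕ), h.Monic ∧ g ∣ f * h - 1 ∧ s ≤ m ∧ (f * h - X ^ m).degree < ↑(m - s) := by
  obtain ⟨u, v, huv⟩ := hfg
  have hfgm : (f * g).Monic := hf.mul hg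
  set m := u.natDegree + (f * g).natDegree + s + 1
  set q := (X ^ m : K[X]) /ₘ (f * g)
  set r := (X ^ m : K[X]) %ₘ (f * g)
  have hXm : r + f * g * q = X ^ m := modByMonic_add_div _ _
  have hfu : (f * u).degree < ↑(m - s) := by
    refine (degree_mul_le _ _).trans_lt ?_
    refine (add_le_add degree_le_natDegree degree_le_natDegree).trans_lt ?_
    have : f.natDegree ≤ (f * g).natDegree := by rw [hf.natDegree_mul hg]; omega
    exact_mod_cast (by omega : f.natDegree + u.natDegree < m - s)
  have hr : r.degree < ↑(m - s) := by
    refine (degree_modByMonic_lt _ hfgm).trans_le ?_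
    rw [degree_eq_natDegree hfgm.ne_zero]
    exact_mod_cast (by omega : (f * g).natDegree ≤ m - s)
  have hdeg : (f * (u + g * q) - X ^ m).degree < ↑(m - s) := by
    rw [show f * (u + g * q) - X ^ m = f * u - r by linear_combination hXm]
    exact (degree_sub_le _ _).trans_lt (max_lt hfu hr)
  have hmonic : (f * (u + g * q)).Monic := by
    rw [← sub_add_cancel (f * (u + g * q)) (X ^ m)]
    refine (monic_X_pow m).add_of_right (hdeg.trans_le ?_)
    rw [degree_X_pow]
    exact_mod_cast Nat.sub_le m s
  exact ⟨u + g * q, m, hf.of_mul_monic_left hmonic,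
    ⟨f * q - v, by linear_combination huv⟩, by omega, hdeg⟩

/-- A monic polynomial `f` is invertible in the quotient monoid
`F_q[t]^×/R_{s,g}` (i.e. there is a monic `h` with `f·h ≡ 1 mod R_{s,g}`) if and only if
`gcd(f, g) = 1`. -/
theorem invertible_mod_Requiv_iff_coprime
    (Fq : Type) [Field Fq] [Fintype Fq] (s : ℕ) (g : Polynomial Fq)
    (f : Polynomial Fq) (hf : f.Monic) :
    (∃ h : Polynomial Fq, h.Monic ∧ Requiv s g (f * h) 1) ↔ IsCoprime f g := by
  constructor
  · rintro ⟨h, -, ⟨k, hk⟩, -⟩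
    exact ⟨h, -k, by linear_combination hk⟩
  · intro hfg
    rcases eq_or_ne g 0 with rfl | hg
    · obtain rfl := hf.eq_one_of_isUnit (isCoprime_zero_right.mp hfg)
      exact ⟨1, monic_one, by rw [mul_one]; exact requiv_refl s 0 1⟩
    have hfg' : IsCoprime f (normalize g) := by
      rw [normalize_apply]
      exact (isCoprime_mul_unit_right_right (Units.isUnit _) _ _).mpr hfg
    obtain ⟨h, m, hh, hdvd, hsm, hdeg⟩ :=
      exists_monic_dvd_mul_sub_one_degree_mul_sub_X_pow_lt hf (monic_normalize hg) hfg' s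
    exact ⟨h, hh, requiv_one_of_dvd_of_degree_sub_X_pow_lt (normalize_dvd_iff.mp hdvd) hsm hdeg⟩
end
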